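/- Let n ≥ 2 be an integer and ω = e^{2πi/n}. Then lim_{y → 1, y > 0} (1/n) Σ_{k=0}^{n-1} [ ((1 - y^{1-1/n} ω^k)/(1 - y^{-1/n} ω^k))^n + Σ_{b=1}^{n-1} y^{b/n} ] = ((1-n)^n + n² - 1)/n. -/

import Mathlib

open Filter Complex

/-- The `q = 0` specialization of the orbifoldized elliptic genus of the LG phase with
weights `w_i = 1` and degree `n`: as `y → 1` (`y > 0`),
`(1/n) Σ_{k=0}^{n-1} [((1 - y^{1-1/n} ω^k)/(1 - y^{-1/n} ω^k))^n + Σ_{b=1}^{n-1} y^{b/n}]`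
tends to `((1-n)^n + n² - 1)/n`, where `ω = e^{2πi/n}`. -/
theorem orbifold_milnor_limit (n : ℕ) (hn : 2 ≤ n) :
    Tendsto (fun y : ℝ =>
        (1 / (n : ℂ)) * ∑ k ∈ Finset.range n,
          (((1 - ((y ^ ((1 : ℝ) - 1 / n) : ℝ) : ℂ) *
                Complex.exp (2 * (Real.pi : ℂ) * Complex.I / n) ^ k) /
              (1 - ((y ^ (-(1 / (n : ℝ))) : ℝ) : ℂ) *
                Complex.exp (2 * (Real.pi : ℂ) * Complex.I / n) ^ k)) ^ n +
            ∑ b ∈ Finset.Icc 1 (n - 1), ((y ^ ((b : ℝ) / n) : ℝ) : ℂ)))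
      (nhdsWithin 1 {y : ℝ | 0 < y ∧ y ≠ 1})
      (nhds (((1 - (n : ℂ)) ^ n + (n : ℂ) ^ 2 - 1) / n)) := by
  have hn0 : (n : ℝ) ≠ 0 := by positivity
  have hnC : (n : ℂ) ≠ 0 := by exact_mod_cast Nat.cast_ne_zero.mpr (by omega)
  set ω : ℂ := Complex.exp (2 * (Real.pi : ℂ) * Complex.I / n) with hω
  have hprim : IsPrimitiveRoot ω n := Complex.isPrimitiveRoot_exp n (by omega)
  have hωk : ∀ k, 0 < k → k < n → ω ^ k ≠ 1 := by
    intro k hk1 hk2 h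
    have hd := (hprim.pow_eq_one_iff_dvd k).mp h
    exact absurd (Nat.le_of_dvd hk1 hd) (by omega)
  set g : ℝ → ℂ := fun y =>
    (1 / (n : ℂ)) * ∑ k ∈ Finset.range n,
      ((if k = 0 then
          -((y ^ ((1 : ℝ)/n) : ℝ) : ℂ) * ∑ j ∈ Finset.range (n-1), ((y ^ ((1 : ℝ)/n) : ℝ) : ℂ) ^ j
        else
          (1 - ((y ^ ((1 : ℝ) - 1 / n) : ℝ) : ℂ) * ω ^ k) /
            (1 - ((y ^ (-(1 / (n : ℝ))) : ℝ) : ℂ) * ω ^ k)) ^ n +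
        ∑ b ∈ Finset.Icc 1 (n - 1), ((y ^ ((b : ℝ) / n) : ℝ) : ℂ))
    with hg
  have heq : ∀ y ∈ {y : ℝ | 0 < y ∧ y ≠ 1}, (fun y : ℝ =>
        (1 / (n : ℂ)) * ∑ k ∈ Finset.range n,
          (((1 - ((y ^ ((1 : ℝ) - 1 / n) : ℝ) : ℂ) * ω ^ k) /
              (1 - ((y ^ (-(1 / (n : ℝ))) : ℝ) : ℂ) * ω ^ k)) ^ n +
            ∑ b ∈ Finset.Icc 1 (n - 1), ((y ^ ((b : ℝ) / n) : ℝ) : ℂ))) y = g y := by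
    rintro y ⟨hy0, hy1⟩
    simp only [hg]
    congr 1
    apply Finset.sum_congr rfl
    intro k hk
    congr 1
    by_cases hk0 : k = 0
    · subst hk0
      rw [if_pos rfl]
      congr 1
      set s : ℝ := y ^ ((1:ℝ)/n) with hs
      have hs0 : 0 < s := Real.rpow_pos_of_pos hy0 _
      have hsn : s ^ n = y := by
        rw [hs, ← Real.rpow_natCast (y ^ ((1:ℝ)/n)) n, ← Real.rpow_mul hy0.le]
        field_simp
        simp
      have hs1 : s ≠ 1 := by
        intro h; apply hy1; rw [← hsn, h, one_pow]
      have h1 : (y ^ ((1:ℝ) - 1/n) : ℝ) = s ^ (n - 1 : ℕ) := by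
        rw [hs, ← Real.rpow_natCast (y ^ ((1:ℝ)/n)) (n-1), ← Real.rpow_mul hy0.le]
        congr 1
        have hc : ((n - 1 : ℕ) : ℝ) = (n : ℝ) - 1 := by
          push_cast [Nat.cast_sub (by omega : 1 ≤ n)]; ring
        rw [hc]; field_simp
      have h2 : (y ^ (-(1 / (n:ℝ))) : ℝ) = s⁻¹ := by
        rw [hs, ← Real.rpow_neg_one (y ^ ((1:ℝ)/n)), ← Real.rpow_mul hy0.le]
        congr 1; ring
      rw [h1, h2]
      have ht0 : (s : ℂ) ≠ 0 := Complex.ofReal_ne_zero.mpr hs0.ne'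
      have ht1 : (s : ℂ) ≠ 1 := fun h => hs1 (by exact_mod_cast h)
      set t : ℂ := (s : ℂ) with ht
      have hden : (1 : ℂ) - (t⁻¹) ≠ 0 := by
        intro h
        exact ht1 (inv_eq_one.mp (by linear_combination -h))
      simp only [pow_zero, mul_one]
      push_cast
      rw [div_eq_iff (by simpa using hden)]
      have key : 1 - t ^ (n-1) = -(t * ∑ j ∈ Finset.range (n-1), t ^ j) +
          (∑ j ∈ Finset.range (n-1), t ^ j) := by
        linear_combination geom_sum_mul t (n-1)
      rw [key]
      field_simp
      rw [← ht]
      field_simp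
      ring
    · rw [if_neg hk0]
  have hc : ∀ a : ℝ, ContinuousAt (fun y : ℝ => ((y ^ a : ℝ) : ℂ)) 1 := fun a =>
    Complex.continuous_ofReal.continuousAt.comp
      (Real.continuousAt_rpow_const 1 a (Or.inl one_ne_zero))
  have hgcont : ContinuousAt g 1 := by
    rw [hg]
    apply ContinuousAt.mul continuousAt_const
    apply tendsto_finset_sum
    intro k hk
    apply ContinuousAt.add
    · apply ContinuousAt.pow
      by_cases hk0 : k = 0
      · subst hk0
        simp only [if_pos rfl]
        exact ((hc _).neg.mul (tendsto_finset_sum _ fun j _ => (hc _).pow j))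
      · simp only [if_neg hk0]
        apply ContinuousAt.div (continuousAt_const.sub ((hc _).mul continuousAt_const))
          (continuousAt_const.sub ((hc _).mul continuousAt_const))
        simp only [Pi.sub_apply, Pi.mul_apply, Real.one_rpow, Complex.ofReal_one, one_mul]
        exact sub_ne_zero.mpr (Ne.symm (hωk k (Nat.pos_of_ne_zero hk0) (Finset.mem_range.mp hk)))
    · exact tendsto_finset_sum _ fun b _ => hc _
  have hval : g 1 = ((1 - (n : ℂ)) ^ n + (n : ℂ) ^ 2 - 1) / n := by
    simp only [hg, Real.one_rpow, Complex.ofReal_one, one_pow, one_mul, Finset.sum_const,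
      nsmul_eq_mul, mul_one]
    rw [← Finset.add_sum_erase _ _ (Finset.mem_range.mpr (by omega : 0 < n))]
    rw [if_pos rfl]
    have hconst : ∀ k ∈ (Finset.range n).erase 0,
        ((if k = 0 then -1 * (((Finset.range (n-1)).card : ℕ) : ℂ)
            else (1 - ω ^ k) / (1 - ω ^ k)) ^ n + (((Finset.Icc 1 (n-1)).card : ℕ) : ℂ))
          = 1 + (((Finset.Icc 1 (n-1)).card : ℕ) : ℂ) := by
      intro k hk
      rw [if_neg (Finset.ne_of_mem_erase hk), div_self (sub_ne_zero.mpr (Ne.symm (hωk k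
        (Nat.pos_of_ne_zero (Finset.ne_of_mem_erase hk))
        (Finset.mem_range.mp (Finset.mem_of_mem_erase hk))))), one_pow]
    rw [Finset.sum_congr rfl hconst, Finset.sum_const]
    have hcast : ((n - 1 : ℕ) : ℂ) = (n : ℂ) - 1 := by
      push_cast [Nat.cast_sub (by omega : 1 ≤ n)]; ring
    simp only [Finset.card_erase_of_mem (Finset.mem_range.mpr (by omega : 0 < n)),
      Finset.card_range, Nat.card_Icc, nsmul_eq_mul,
      show (n - 1 + 1 - 1 : ℕ) = n - 1 from by omega]
    rw [hcast, neg_one_mul, neg_sub]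
    field_simp
    ring
  have htend : Tendsto g (nhdsWithin 1 {y : ℝ | 0 < y ∧ y ≠ 1}) (nhds (g 1)) :=
    hgcont.tendsto.mono_left nhdsWithin_le_nhds
  rw [hval] at htend
  exact htend.congr' (Filter.eventuallyEq_of_mem self_mem_nhdsWithin
    (fun y hy => (heq y hy).symm))
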